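/- Let 1 ≤ p₁ ≤ p₂ ≤ q < ∞. Then ℓ^{p₂}_q ⊆ ℓ^{p₁}_q, and ‖x‖_{ℓ^{p₁}_q} ≤ ‖x‖_{ℓ^{p₂}_q} for every x ∈ ℓ^{p₂}_q. -/

import Mathlib

open scoped ENNReal NNReal BigOperators

/-- The discrete "ball" `S_{m,N} = {m-N, …, m+N}` as a finite set of integers. -/
noncomputable def S (m : ℤ) (N : ℕ) : Finset ℤ := Finset.Icc (m - N) (m + N)

/-- The discrete Morrey norm `‖x‖_{ℓ^p_q}`. -/
noncomputable def morreyNorm (p q : ℝ) (x : ℤ → ℂ) : ℝ≥0∞ :=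
  ⨆ (m : ℤ) (N : ℕ),
    (2 * (N : ℝ≥0∞) + 1) ^ (1 / q - 1 / p) *
      (∑ k ∈ S m N, (‖x k‖₊ : ℝ≥0∞) ^ p) ^ (1 / p)

/-!
On a window of `n` points, Hölder's inequality gives
`‖y‖_{ℓ^{p₁}} ≤ n ^ (1/p₁ - 1/p₂) ‖y‖_{ℓ^{p₂}}` for `p₁ ≤ p₂`. Multiplying by the Morrey weight
`n ^ (1/q - 1/p₁)` turns the right side into the `ℓ^{p₂}_q` weight `n ^ (1/q - 1/p₂)` times
`‖y‖_{ℓ^{p₂}}`, so every term of the supremum defining `‖x‖_{ℓ^{p₁}_q}` is bounded by the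
corresponding term for `‖x‖_{ℓ^{p₂}_q}`.
-/

namespace ENNReal

theorem Lp_le_card_rpow_mul_Lp {ι : Type*} (s : Finset ι) (f : ι → ℝ≥0∞) {p₁ p₂ : ℝ}
    (hp₁ : 0 < p₁) (hp : p₁ ≤ p₂) :
    (∑ i ∈ s, f i ^ p₁) ^ (1 / p₁) ≤
      (s.card : ℝ≥0∞) ^ (1 / p₁ - 1 / p₂) * (∑ i ∈ s, f i ^ p₂) ^ (1 / p₂) := by
  have hp₂ : 0 < p₂ := hp₁.trans_le hp
  have holder := rpow_sum_le_const_mul_sum_rpow s (fun i => f i ^ p₁)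
    ((one_le_div hp₁).2 hp)
  simp only [← rpow_mul, mul_div_cancel₀ _ hp₁.ne'] at holder
  have h := rpow_le_rpow holder (one_div_nonneg.2 hp₂.le)
  have hsum_exp : p₂ / p₁ * (1 / p₂) = 1 / p₁ := by field_simp
  have hcard_exp : (p₂ / p₁ - 1) * (1 / p₂) = 1 / p₁ - 1 / p₂ := by field_simp
  rwa [mul_rpow_of_nonneg _ _ (one_div_nonneg.2 hp₂.le), ← rpow_mul, ← rpow_mul, hsum_exp,
    hcard_exp] at h

end ENNReal

theorem card_S (m : ℤ) (N : ℕ) : (S m N).card = 2 * N + 1 := by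
  simp only [S, Int.card_Icc]
  omega

theorem morrey_window_le (p₁ p₂ q : ℝ) (hp₁ : 0 < p₁) (hp : p₁ ≤ p₂) (x : ℤ → ℂ) (m : ℤ)
    (N : ℕ) :
    (2 * (N : ℝ≥0∞) + 1) ^ (1 / q - 1 / p₁) * (∑ k ∈ S m N, (‖x k‖₊ : ℝ≥0∞) ^ p₁) ^ (1 / p₁) ≤
      (2 * (N : ℝ≥0∞) + 1) ^ (1 / q - 1 / p₂) *
        (∑ k ∈ S m N, (‖x k‖₊ : ℝ≥0∞) ^ p₂) ^ (1 / p₂) := by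
  have hcard : ((S m N).card : ℝ≥0∞) = 2 * N + 1 := by
    rw [card_S]
    push_cast
    rfl
  have hc0 : (2 * (N : ℝ≥0∞) + 1) ≠ 0 := by positivity
  have hctop : (2 * (N : ℝ≥0∞) + 1) ≠ ⊤ := by finiteness
  calc _ ≤ (2 * (N : ℝ≥0∞) + 1) ^ (1 / q - 1 / p₁) *
        ((2 * (N : ℝ≥0∞) + 1) ^ (1 / p₁ - 1 / p₂) *
          (∑ k ∈ S m N, (‖x k‖₊ : ℝ≥0∞) ^ p₂) ^ (1 / p₂)) := by
        gcongr
        simpa only [hcard] using ENNReal.Lp_le_card_rpow_mul_Lp (S m N) _ hp₁ hp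
    _ = _ := by
        rw [← mul_assoc, ← ENNReal.rpow_add _ _ hc0 hctop, sub_add_sub_cancel]

theorem stmt5_general (p₁ p₂ q : ℝ) (hp₁ : 1 ≤ p₁) (hp : p₁ ≤ p₂) (x : ℤ → ℂ) :
    morreyNorm p₁ q x ≤ morreyNorm p₂ q x :=
  iSup₂_mono fun m N => morrey_window_le p₁ p₂ q (zero_lt_one.trans_le hp₁) hp x m N

theorem stmt5 (p₁ p₂ q : ℝ) (hp₁ : 1 ≤ p₁) (hp : p₁ ≤ p₂) (hq : p₂ ≤ q) (x : ℤ → ℂ)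
    (hx : morreyNorm p₂ q x < ⊤) :
    morreyNorm p₁ q x ≤ morreyNorm p₂ q x :=
  stmt5_general p₁ p₂ q hp₁ hp x
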